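/- (Theorem 1: expected number of erroneous surviving paths.) Fix integers K ≥ j ≥ 1 and n ≥ j, fragment information lengths m : {0,…,j−1} → ℕ, and parity lengths l : {1,…,j−1} → ℕ. Let the message tuple W : {1,…,K} → ∏_{ℓ=0}^{j−1} F₂^{m(ℓ)} be uniformly random and, independently, let the generator blocks G_{ℓ,q−1} ∈ F₂^{m(ℓ)×l(q)} (0 ≤ ℓ ≤ q−1 ≤ j−2) be independent and uniformly random. Let L_{j−1} be the number of index sequences i : {0,…,j−1} → {1,…,K} with i(0)=1 that are erroneous (i is not identically 1) and survive, i.e., Σ_{ℓ=0}^{q−1} ( W_{i(ℓ)}(ℓ) + W_{i(q)}(ℓ) )·G_{ℓ,q−1} = 0 for all q = 1,…,j−1. Then E[L_{j−1}] = Σ_{s ∈ P_j} n(s) · E_W[ ∏_{q=1}^{j−1} ( 2^(−l(q)) if A_{q,s}(W) fails, and 1 if A_{q,s}(W) holds ) ] − 1, where n(s) = ∏_{t=1}^{d(s)−1} (K−t) and A_{q,s}(W) is the event that W_{s(q)}(ℓ) = W_{s(ℓ)}(ℓ) for every ℓ < q with s(ℓ) ≠ s(q). -/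

import Mathlib

/-!
Fix the messages `W`. The parity blocks of different stages `q` are independent, and for a fixed
path `i` the check at stage `q` is an `F₂`-linear function of the uniform blocks `G_{·,q-1}`: it
vanishes identically when message `i q` agrees with the path on all earlier fragments, and is
otherwise onto `F₂^{l q}`, hence vanishes with probability `2^{-l q}`. The all-`1` path survives
surely and accounts for the `- 1`. The remaining rooted paths are grouped by their pattern
`s` (each entry replaced by one plus the index of its first occurrence): a permutation of the
messages, which preserves the law of `W`, carries every path with pattern `s` to the path read off
from `s`, whose survival probability is `Φ_s(1/2)`; and a path with pattern `s` is an injective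
relabelling of the `d(s)` levels fixing level `1`, of which there are `∏_{t=1}^{d(s)-1} (K - t)`.
-/

/-- A `j`-pattern sequence: `s 0 = 1` and each subsequent value is either `ℓ + 1`
(a fresh label) or equal to an earlier value. -/
def IsPatternSeq (j : ℕ) (s : Fin j → ℕ) : Prop :=
  (∀ h0 : 0 < j, s ⟨0, h0⟩ = 1) ∧
  ∀ ℓ : Fin j, 1 ≤ ℓ.val → (s ℓ = ℓ.val + 1 ∨ ∃ q : Fin j, q < ℓ ∧ s ℓ = s q)

/-- A message tuple: `K` messages, each consisting of `j` fragments, the `ℓ`-th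
fragment being a row vector in `F₂^{m ℓ}`. -/
abbrev MsgTuple (K j : ℕ) (m : Fin j → ℕ) : Type :=
  Fin K → (ℓ : Fin j) → Fin (m ℓ) → ZMod 2

/-- A tuple of generator blocks `G_{ℓ,q-1} ∈ F₂^{m ℓ × l q}`, one for each pair
`0 ≤ ℓ < q ≤ j-1`. -/
abbrev GenTuple (j : ℕ) (m l : Fin j → ℕ) : Type :=
  (q : Fin j) → (ℓ : Fin j) → ℓ.val < q.val → Matrix (Fin (m ℓ)) (Fin (l q)) (ZMod 2)

/-- The event `A_{q,s}(W)`: the fragments of message `s q` preceding slot `q` and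
belonging to different levels of the pattern `s` coincide with the corresponding
fragments on the path, rendering the parity bits of sub-block `q` non-discriminating.
Pattern values in `{1,…,K}` are read as message indices via `t ↦ (t-1) % K`. -/
def AEvent (K j : ℕ) (hK : 0 < K) (m : Fin j → ℕ) (s : Fin j → ℕ) (q : Fin j)
    (W : MsgTuple K j m) : Prop :=
  ∀ ℓ : Fin j, ℓ < q → s ℓ ≠ s q →
    W ⟨(s q - 1) % K, Nat.mod_lt _ hK⟩ ℓ = W ⟨(s ℓ - 1) % K, Nat.mod_lt _ hK⟩ ℓ

open Finset

theorem AddMonoidHom.card_ker_mul_card_of_surjective {A B : Type*} [AddGroup A] [AddGroup B]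
    (φ : A →+ B) (hφ : Function.Surjective φ) : Nat.card φ.ker * Nat.card B = Nat.card A := by
  rw [← AddSubgroup.card_mul_index φ.ker, AddSubgroup.index_ker,
    φ.range_eq_top_of_surjective hφ, AddSubgroup.card_top]

section SumVecMul

variable {ι : Type*} [Fintype ι] {κ : ι → Type*} [∀ x, Fintype (κ x)] {n : Type*}
  {F : Type*} [Field F]

variable (n) in
def sumVecMul (v : ∀ x, κ x → F) : ((x : ι) → Matrix (κ x) n F) →+ (n → F) where
  toFun g := ∑ x, Matrix.vecMul (v x) (g x)
  map_zero' := by simp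
  map_add' g g' := by simp [Matrix.vecMul_add, sum_add_distrib]

theorem sumVecMul_surjective {v : ∀ x, κ x → F} (hv : v ≠ 0) :
    Function.Surjective (sumVecMul n v) := by
  classical
  obtain ⟨x₀, hx₀⟩ := Function.ne_iff.mp hv
  obtain ⟨t₀, ht₀⟩ := Function.ne_iff.mp hx₀
  intro c
  refine ⟨Pi.single x₀ (Matrix.vecMulVec (Pi.single t₀ (v x₀ t₀)⁻¹) c), ?_⟩
  rw [sumVecMul, AddMonoidHom.coe_mk, ZeroHom.coe_mk, sum_eq_single x₀]
  · simp [Matrix.vecMul_vecMulVec, mul_inv_cancel₀ ht₀]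
  · intro x _ hx
    simp [hx]
  · simp

theorem sum_ite_sumVecMul_eq_zero [DecidableEq ι] [∀ x, DecidableEq (κ x)] [Fintype n]
    [DecidableEq n] [Fintype F] [DecidableEq F]
    (v : ∀ x, κ x → F) :
    (∑ g : (x : ι) → Matrix (κ x) n F, if sumVecMul n v g = 0 then (1 : ℚ) else 0)
      = Fintype.card ((x : ι) → Matrix (κ x) n F)
        * if v = 0 then 1 else ((Fintype.card F : ℚ) ^ Fintype.card n)⁻¹ := by
  split_ifs with hv
  · simp [hv, sumVecMul]
  · have hcard := (sumVecMul n v).card_ker_mul_card_of_surjective (sumVecMul_surjective hv)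
    rw [sum_boole, ← Fintype.card_subtype]
    simp only [Nat.card_eq_fintype_card, Fintype.card_fun, AddMonoidHom.mem_ker] at hcard
    rw [eq_mul_inv_iff_mul_eq₀ (by positivity)]
    exact_mod_cast hcard

end SumVecMul

section Kernel

variable {α β γ : Type*}

theorem exists_perm_comp_eq_of_ker_eq [Finite α] {f g : α → β}
    (h : ∀ a b, f a = f b ↔ g a = g b) : ∃ σ : Equiv.Perm β, ∀ a, σ (f a) = g a := by
  let g' : Quotient (Setoid.ker f) → β := Quotient.lift g fun a b hab => (h a b).1 hab
  have hg' : Function.Injective g' := by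
    rintro ⟨a⟩ ⟨b⟩ hab
    exact Quotient.sound ((h a b).2 hab)
  obtain ⟨σ, hσ⟩ :=
    Equiv.Perm.exists_extending_pair (Setoid.kerLift f) g' (Setoid.kerLift_injective f) hg'
  exact ⟨σ, fun a => hσ ⟦a⟧⟩

theorem sum_comp_eq_of_ker_eq {M : Type*} [AddCommMonoid M] [Finite α] [Fintype β]
    [DecidableEq β] [Fintype γ] {f g : α → β} (h : ∀ a b, f a = f b ↔ g a = g b)
    (Φ : (α → γ) → M) :
    ∑ W : β → γ, Φ (W ∘ f) = ∑ W : β → γ, Φ (W ∘ g) := by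
  obtain ⟨σ, hσ⟩ := exists_perm_comp_eq_of_ker_eq h
  refine Fintype.sum_equiv (σ.arrowCongr (Equiv.refl γ)) _ _ fun W => ?_
  congr 1
  funext a
  simp [← hσ a]

def kerEqEquivEmbedding (f : α → β) :
    {g : α → γ // ∀ a b, g a = g b ↔ f a = f b} ≃ (Quotient (Setoid.ker f) ↪ γ) where
  toFun g := ⟨Quotient.lift g.1 fun a b hab => (g.2 a b).2 hab, by
    rintro ⟨a⟩ ⟨b⟩ hab
    exact Quotient.sound ((g.2 a b).1 hab)⟩
  invFun e := ⟨fun a => e ⟦a⟧, fun a b => e.injective.eq_iff.trans Quotient.eq⟩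
  left_inv _ := rfl
  right_inv e := by
    ext ⟨a⟩
    rfl

theorem card_ker_eq_eq_descFactorial [Fintype α] [DecidableEq β] [Fintype γ] (f : α → β) :
    Nat.card {g : α → γ // ∀ a b, g a = g b ↔ f a = f b}
      = (Fintype.card γ).descFactorial #(univ.image f) := by
  classical
  rw [Nat.card_congr (kerEqEquivEmbedding f), Nat.card_eq_fintype_card, Fintype.card_embedding_eq,
    Fintype.card_congr (Setoid.quotientKerEquivRange f), ← Set.toFinset_card, Set.toFinset_range]

theorem card_ker_eq_of_apply_eq_eq_descFactorial [Fintype α] [DecidableEq β] [Fintype γ]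
    (f : α → β) (a₀ : α) (z : γ) :
    Nat.card {g : α → γ // g a₀ = z ∧ ∀ a b, g a = g b ↔ f a = f b}
      = (Fintype.card γ - 1).descFactorial (#(univ.image f) - 1) := by
  classical
  let N : γ → ℕ := fun z' =>
    Nat.card {g : α → γ // g a₀ = z' ∧ ∀ a b, g a = g b ↔ f a = f b}
  -- Post-composing with a transposition shows that the count does not depend on `z`.
  have hN : ∀ z', N z' = N z := fun z' => Nat.card_congr <|
    (Equiv.arrowCongr (Equiv.refl α) (Equiv.swap z' z)).subtypeEquiv fun g => by
      simp [(Equiv.swap z' z).injective.eq_iff, Equiv.swap_apply_eq_iff]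
  have hsum : Fintype.card γ * N z = (Fintype.card γ).descFactorial #(univ.image f) := by
    calc Fintype.card γ * N z = ∑ z', N z' := by simp [hN]
      _ = Nat.card {g : α → γ // ∀ a b, g a = g b ↔ f a = f b} := by
        simp only [N, Nat.card_eq_fintype_card, Fintype.card_subtype]
        rw [card_eq_sum_card_fiberwise (f := fun g => g a₀) (t := univ) fun _ _ => mem_univ _]
        simp_rw [filter_filter, and_comm]
      _ = _ := card_ker_eq_eq_descFactorial f
  obtain ⟨c, hc⟩ := Nat.exists_eq_add_one_of_ne_zero (Fintype.card_pos_iff.2 ⟨z⟩).ne'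
  obtain ⟨d, hd⟩ := Nat.exists_eq_add_one_of_ne_zero
    (card_ne_zero_of_mem (mem_image_of_mem f (mem_univ a₀)))
  rw [hc, hd, Nat.succ_descFactorial_succ] at hsum
  rw [hc, hd]
  exact Nat.eq_of_mul_eq_mul_left c.succ_pos hsum

end Kernel

namespace IsPatternSeq

variable {j : ℕ} {s t : Fin j → ℕ}

theorem apply_of_val_eq_zero (hs : IsPatternSeq j s) {ℓ : Fin j} (hℓ : ℓ.val = 0) :
    s ℓ = 1 := by
  obtain ⟨ℓ, hlt⟩ := ℓ
  subst hℓ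
  exact hs.1 hlt

theorem apply_mem_Icc (hs : IsPatternSeq j s) (ℓ : Fin j) : s ℓ ∈ Set.Icc 1 (ℓ.val + 1) := by
  induction ℓ using WellFoundedLT.induction with
  | _ ℓ ih =>
    rw [Set.mem_Icc]
    rcases Nat.eq_zero_or_pos ℓ.val with h0 | h0
    · simp [hs.apply_of_val_eq_zero h0]
    · rcases hs.2 ℓ h0 with h | ⟨q, hq, h⟩
      · omega
      · obtain ⟨_, _⟩ := ih q hq
        have : q.val < ℓ.val := hq
        omega

theorem eq_of_ker_eq (hs : IsPatternSeq j s) (ht : IsPatternSeq j t)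
    (h : ∀ a b, s a = s b ↔ t a = t b) : s = t := by
  funext ℓ
  induction ℓ using WellFoundedLT.induction with
  | _ ℓ ih =>
    rcases Nat.eq_zero_or_pos ℓ.val with h0 | h0
    · rw [hs.apply_of_val_eq_zero h0, ht.apply_of_val_eq_zero h0]
    · rcases hs.2 ℓ h0 with hfresh | ⟨q, hq, hsq⟩
      · rcases ht.2 ℓ h0 with htfresh | ⟨q, hq, htq⟩
        · rw [hfresh, htfresh]
        · obtain ⟨-, _⟩ := hs.apply_mem_Icc q
          have : q.val < ℓ.val := hq
          have := (h ℓ q).2 htq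
          omega
      · rw [hsq, (h ℓ q).1 hsq, ih q hq]

end IsPatternSeq

section Pattern

variable {j : ℕ} {β : Type*} [DecidableEq β]

def firstIndex (i : Fin j → β) (ℓ : Fin j) : Fin j :=
  (univ.filter (i · = i ℓ)).min' ⟨ℓ, by simp⟩

def pattern (i : Fin j → β) (ℓ : Fin j) : ℕ := (firstIndex i ℓ).val + 1

theorem apply_firstIndex (i : Fin j → β) (ℓ : Fin j) : i (firstIndex i ℓ) = i ℓ :=
  (mem_filter.1 (min'_mem (univ.filter (i · = i ℓ)) _)).2

theorem firstIndex_le (i : Fin j → β) (ℓ : Fin j) : firstIndex i ℓ ≤ ℓ :=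
  min'_le _ _ (by simp)

theorem pattern_eq_pattern_iff (i : Fin j → β) (a b : Fin j) :
    pattern i a = pattern i b ↔ i a = i b := by
  refine ⟨fun h => ?_, fun h => ?_⟩
  · rw [← apply_firstIndex i a, ← apply_firstIndex i b, Fin.ext (Nat.succ_injective h)]
  · simp only [pattern, firstIndex, h]

theorem isPatternSeq_pattern (i : Fin j → β) : IsPatternSeq j (pattern i) := by
  refine ⟨fun h0 => ?_, fun ℓ _ => ?_⟩
  · have := firstIndex_le i ⟨0, h0⟩
    simp only [pattern, Fin.le_def] at this ⊢
    omega
  · rcases (firstIndex_le i ℓ).lt_or_eq with hlt | heq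
    · exact .inr ⟨_, hlt, ((pattern_eq_pattern_iff i _ _).2 (apply_firstIndex i ℓ)).symm⟩
    · exact .inl (by rw [pattern, heq])

theorem pattern_eq_iff {i : Fin j → β} {s : Fin j → ℕ} (hs : IsPatternSeq j s) :
    pattern i = s ↔ ∀ a b, i a = i b ↔ s a = s b := by
  refine ⟨fun h a b => by rw [← h, pattern_eq_pattern_iff], fun h => ?_⟩
  exact (isPatternSeq_pattern i).eq_of_ker_eq hs fun a b =>
    (pattern_eq_pattern_iff i a b).trans (h a b)

end Pattern

theorem finite_setOf_isPatternSeq (j : ℕ) : {s | IsPatternSeq j s}.Finite :=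
  (Set.finite_Iic fun _ : Fin j => j).subset fun s hs ℓ => by
    show s ℓ ≤ j
    obtain ⟨-, _⟩ := (hs : IsPatternSeq j s).apply_mem_Icc ℓ
    omega

theorem Nat.descFactorial_pred_eq_prod_Icc (n d : ℕ) :
    (n - 1).descFactorial d = ∏ t ∈ Icc 1 d, (n - t) := by
  induction d with
  | zero => simp
  | succ d ih =>
    rw [Nat.descFactorial_succ, ih, prod_Icc_succ_top (by omega), mul_comm, Nat.sub_sub, add_comm]

theorem sum_filter_apply_eq_and_exists_ne {α β M : Type*} [Fintype α] [DecidableEq α]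
    [Fintype β] [DecidableEq β] [AddCommGroup M] (a₀ : α) (z : β)
    [DecidablePred fun i : α → β => i a₀ = z ∧ ∃ t, i t ≠ z] (h : (α → β) → M) :
    ∑ i ∈ univ.filter (fun i => i a₀ = z ∧ ∃ t, i t ≠ z), h i
      = ∑ i ∈ univ.filter (fun i => i a₀ = z), h i - h fun _ => z := by
  classical
  have : univ.filter (fun i => i a₀ = z ∧ ∃ t, i t ≠ z)
      = (univ.filter fun i => i a₀ = z).erase fun _ => z := by
    ext i
    simp [Function.ne_iff, and_comm]
  rw [this, sum_erase_eq_sub (by simp)]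

section Decoding

variable {K j : ℕ} {m l : Fin j → ℕ}

variable (l) in
def parityCheck (V : Fin j → (ℓ : Fin j) → Fin (m ℓ) → ZMod 2) (q : Fin j)
    (g : (ℓ : Fin j) → ℓ.val < q.val → Matrix (Fin (m ℓ)) (Fin (l q)) (ZMod 2)) :
    Fin (l q) → ZMod 2 :=
  ∑ ℓ : Fin j,
    if h : ℓ.val < q.val then Matrix.vecMul (fun t => V ℓ ℓ t + V q ℓ t) (g ℓ h) else 0

abbrev Survives (W : MsgTuple K j m) (G : GenTuple j m l) (i : Fin j → Fin K) : Prop :=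
  ∀ q : Fin j, 1 ≤ q.val →
    (∑ ℓ : Fin j, if h : ℓ.val < q.val
        then Matrix.vecMul (fun t => W (i ℓ) ℓ t + W (i q) ℓ t) (G q ℓ h) else 0) = 0

variable (l) in
def parityFactor (V : Fin j → (ℓ : Fin j) → Fin (m ℓ) → ZMod 2) (q : Fin j) : ℚ :=
  if ∀ ℓ < q, V q ℓ = V ℓ ℓ then 1 else 2 ^ (-(l q : ℤ))

variable (l) in
def survivalProb (V : Fin j → (ℓ : Fin j) → Fin (m ℓ) → ZMod 2) : ℚ :=
  ∏ q ∈ univ.filter (fun q : Fin j => 1 ≤ q.val), parityFactor l V q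

theorem sum_ite_parityCheck_eq_zero (V : Fin j → (ℓ : Fin j) → Fin (m ℓ) → ZMod 2)
    (q : Fin j) :
    (∑ g : (ℓ : Fin j) → ℓ.val < q.val → Matrix (Fin (m ℓ)) (Fin (l q)) (ZMod 2),
        if parityCheck l V q g = 0 then (1 : ℚ) else 0)
      = Fintype.card
          ((ℓ : Fin j) → ℓ.val < q.val → Matrix (Fin (m ℓ)) (Fin (l q)) (ZMod 2))
        * parityFactor l V q := by
  let e : ((ℓ : Fin j) → ℓ.val < q.val → Matrix (Fin (m ℓ)) (Fin (l q)) (ZMod 2))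
      ≃ ((x : {ℓ : Fin j // ℓ.val < q.val}) → Matrix (Fin (m x)) (Fin (l q)) (ZMod 2)) :=
    ⟨fun g x => g x x.2, fun g ℓ h => g ⟨ℓ, h⟩, fun _ => rfl, fun _ => rfl⟩
  set v := fun x : {ℓ : Fin j // ℓ.val < q.val} => V x x + V q x
  have hcheck : ∀ g, parityCheck l V q g = sumVecMul _ v (e g) := by
    intro g
    rw [parityCheck, ← Fintype.sum_subtype_add_sum_subtype (fun ℓ : Fin j => ℓ.val < q.val)]
    exact (congrArg₂ (· + ·) (sum_congr rfl fun x _ => dif_pos x.2)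
      (sum_eq_zero fun x _ => dif_neg x.2)).trans (add_zero _)
  have hv : v = 0 ↔ ∀ ℓ < q, V q ℓ = V ℓ ℓ := by
    simp only [v, funext_iff, Pi.add_apply, Pi.zero_apply, CharTwo.add_eq_zero, Subtype.forall]
    exact ⟨fun h ℓ hℓ x => (h ℓ hℓ x).symm, fun h ℓ hℓ x => (h ℓ hℓ x).symm⟩
  rw [Fintype.sum_equiv e _ (fun g => if sumVecMul _ v g = 0 then 1 else 0)
      (fun g => by rw [hcheck]),
    sum_ite_sumVecMul_eq_zero, Fintype.card_congr e, parityFactor]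
  simp [hv, zpow_neg]

theorem parityCheck_eq_zero_of_val_eq_zero (V : Fin j → (ℓ : Fin j) → Fin (m ℓ) → ZMod 2)
    {q : Fin j} (hq : q.val = 0)
    (g : (ℓ : Fin j) → ℓ.val < q.val → Matrix (Fin (m ℓ)) (Fin (l q)) (ZMod 2)) :
    parityCheck l V q g = 0 :=
  sum_eq_zero fun ℓ _ => dif_neg (by omega)

theorem sum_ite_survives (W : MsgTuple K j m) (i : Fin j → Fin K) :
    ∑ G : GenTuple j m l, (if Survives W G i then (1 : ℚ) else 0)
      = Fintype.card (GenTuple j m l) * survivalProb l (W ∘ i) := by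
  have hsurv : ∀ G, Survives W G i ↔ ∀ q, parityCheck l (W ∘ i) q (G q) = 0 := fun G =>
    forall_congr' fun q => by
      rcases Nat.eq_zero_or_pos q.val with hq | hq
      · simp [hq, parityCheck_eq_zero_of_val_eq_zero _ hq]
      · exact ⟨fun h => h hq, fun h _ => h⟩
  have hfactor : ∀ q ∈ univ, parityFactor l (W ∘ i) q ≠ 1 → 1 ≤ q.val := by
    intro q _ hq
    by_contra h0
    exact hq (if_pos fun ℓ hℓ => absurd (Fin.lt_def.1 hℓ) (by omega))
  calc ∑ G : GenTuple j m l, (if Survives W G i then (1 : ℚ) else 0)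
      = ∑ G : GenTuple j m l, ∏ q,
          if parityCheck l (W ∘ i) q (G q) = 0 then (1 : ℚ) else 0 := by
        simp only [hsurv, Fintype.prod_boole]
        congr!
    _ = ∏ q, ∑ g, if parityCheck l (W ∘ i) q g = 0 then (1 : ℚ) else 0 := by
        rw [Fintype.prod_sum]
    _ = Fintype.card (GenTuple j m l) * survivalProb l (W ∘ i) := by
        simp only [sum_ite_parityCheck_eq_zero, prod_mul_distrib, Fintype.card_pi, Nat.cast_prod,
          survivalProb]
        rw [prod_filter_of_ne hfactor]

theorem sum_card_survives (W : MsgTuple K j m) (P : (Fin j → Fin K) → Prop)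
    [DecidablePred P] :
    ∑ G : GenTuple j m l, (Nat.card {i // P i ∧ Survives W G i} : ℚ)
      = Fintype.card (GenTuple j m l) * ∑ i ∈ univ.filter P, survivalProb l (W ∘ i) := by
  classical
  simp_rw [Nat.card_eq_fintype_card, Fintype.card_subtype, ← filter_filter, natCast_card_filter]
  rw [sum_comm, mul_sum]
  exact sum_congr rfl fun i _ => sum_ite_survives W i

theorem survivalProb_const (x : (ℓ : Fin j) → Fin (m ℓ) → ZMod 2) :
    survivalProb l (fun _ => x) = 1 :=
  prod_eq_one fun _ _ => if_pos fun _ _ => rfl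

def patternIndex (hK : 0 < K) (s : Fin j → ℕ) (ℓ : Fin j) : Fin K :=
  ⟨(s ℓ - 1) % K, Nat.mod_lt _ hK⟩

theorem patternIndex_eq_iff (hK : 0 < K) (hjK : j ≤ K) {s : Fin j → ℕ} (hs : IsPatternSeq j s)
    (a b : Fin j) : patternIndex hK s a = patternIndex hK s b ↔ s a = s b := by
  obtain ⟨_, _⟩ := hs.apply_mem_Icc a
  obtain ⟨_, _⟩ := hs.apply_mem_Icc b
  have := a.isLt
  have := b.isLt
  rw [patternIndex, patternIndex, Fin.mk.injEq, Nat.mod_eq_of_lt (by omega),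
    Nat.mod_eq_of_lt (by omega)]
  omega

open scoped Classical in
theorem survivalProb_comp_patternIndex (hK : 0 < K) (s : Fin j → ℕ) (W : MsgTuple K j m) :
    survivalProb l (W ∘ patternIndex hK s)
      = ∏ q ∈ univ.filter (fun q : Fin j => 1 ≤ q.val),
          if AEvent K j hK m s q W then (1 : ℚ) else 2 ^ (-(l q : ℤ)) := by
  refine prod_congr rfl fun q _ =>
    if_congr ⟨fun h ℓ hℓ _ => h ℓ hℓ, fun h ℓ hℓ => ?_⟩ rfl rfl
  by_cases hsℓ : s ℓ = s q
  · simp [patternIndex, hsℓ]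
  · exact h ℓ hℓ hsℓ

theorem card_rooted_pattern_eq (hj : 0 < j) (hjK : j ≤ K) {s : Fin j → ℕ}
    (hs : IsPatternSeq j s) :
    #(univ.filter fun i : Fin j → Fin K =>
        i ⟨0, hj⟩ = ⟨0, hj.trans_le hjK⟩ ∧ pattern i = s)
      = ∏ t ∈ Icc 1 (#(univ.image s) - 1), (K - t) := by
  simp_rw [pattern_eq_iff hs]
  rw [← Fintype.card_subtype, ← Nat.card_eq_fintype_card,
    card_ker_eq_of_apply_eq_eq_descFactorial,
    Fintype.card_fin, Nat.descFactorial_pred_eq_prod_Icc]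

open scoped Classical in
theorem sum_rooted_sum_survivalProb (hj : 0 < j) (hjK : j ≤ K) :
    ∑ i ∈ univ.filter (fun i : Fin j → Fin K => i ⟨0, hj⟩ = ⟨0, hj.trans_le hjK⟩),
        ∑ W : MsgTuple K j m, survivalProb l (W ∘ i)
      = ∑ s ∈ (finite_setOf_isPatternSeq j).toFinset,
          ((∏ t ∈ Icc 1 (#(univ.image s) - 1), (K - t) : ℕ) : ℚ)
            * ∑ W : MsgTuple K j m, ∏ q ∈ univ.filter (fun q : Fin j => 1 ≤ q.val),
                if AEvent K j (hj.trans_le hjK) m s q W then (1 : ℚ) else 2 ^ (-(l q : ℤ)) := by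
  have hK := hj.trans_le hjK
  rw [← sum_fiberwise_of_maps_to (g := pattern) (t := (finite_setOf_isPatternSeq j).toFinset)
    fun i _ => by simpa using isPatternSeq_pattern i]
  refine sum_congr rfl fun s hs => ?_
  replace hs : IsPatternSeq j s := by simpa using hs
  have hfiber : ∀ i ∈ (univ.filter fun i : Fin j → Fin K =>
        i ⟨0, hj⟩ = ⟨0, hK⟩).filter (pattern · = s),
      ∑ W : MsgTuple K j m, survivalProb l (W ∘ i)
        = ∑ W : MsgTuple K j m, survivalProb l (W ∘ patternIndex hK s) := by
    intro i hi
    have hker := (pattern_eq_iff hs).1 (mem_filter.1 hi).2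
    exact sum_comp_eq_of_ker_eq
      (fun a b => (hker a b).trans (patternIndex_eq_iff hK hjK hs a b).symm) _
  rw [sum_congr rfl hfiber, sum_const, filter_filter, card_rooted_pattern_eq hj hjK hs,
    nsmul_eq_mul]
  simp_rw [survivalProb_comp_patternIndex]

end Decoding

open scoped Classical in
/-- Theorem 1: with a uniformly random message tuple `W` and, independently,
independent uniformly random generator blocks `G`, the expected number of erroneous
index sequences `i` (rooted at message 1, not identically 1) surviving all stages of
tree decoding equals `Σ_{s ∈ P_j} n(s) · Φ_s(1/2) - 1`, where
`n(s) = ∏_{t=1}^{d(s)-1}(K-t)` and `Φ_s(1/2) = E_W[∏_{q=1}^{j-1} 2^{-l q · 1{A_{q,s}ᶜ}}]`. -/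
theorem expected_number_erroneous_surviving_paths (K j : ℕ)
    (hj : 0 < j) (hjK : j ≤ K) (m l : Fin j → ℕ) :
    (∑ W : MsgTuple K j m, ∑ G : GenTuple j m l,
        (Nat.card {i : Fin j → Fin K //
            i ⟨0, hj⟩ = ⟨0, hj.trans_le hjK⟩ ∧
            (∃ t : Fin j, i t ≠ ⟨0, hj.trans_le hjK⟩) ∧
            ∀ q : Fin j, 1 ≤ q.val →
              (∑ ℓ : Fin j, if h : ℓ.val < q.val
                  then Matrix.vecMul (fun t => W (i ℓ) ℓ t + W (i q) ℓ t) (G q ℓ h)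
                  else 0) = 0} : ℚ))
        / ((Nat.card (MsgTuple K j m) : ℚ) * (Nat.card (GenTuple j m l) : ℚ))
      = (∑ᶠ s ∈ {s : Fin j → ℕ | IsPatternSeq j s},
          ((∏ t ∈ Finset.Icc 1 ((Finset.univ.image s).card - 1), (K - t) : ℕ) : ℚ)
            * ((∑ W : MsgTuple K j m,
                  ∏ q ∈ Finset.univ.filter (fun q : Fin j => 1 ≤ q.val),
                    (if AEvent K j (hj.trans_le hjK) m s q W then (1 : ℚ)
                     else (2 : ℚ) ^ (-(l q : ℤ))))
                / (Nat.card (MsgTuple K j m) : ℚ))) - 1 := by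
  simp only [← and_assoc]
  simp_rw [sum_card_survives (l := l)]
  rw [← mul_sum, sum_comm, sum_filter_apply_eq_and_exists_ne,
    sum_rooted_sum_survivalProb hj hjK,
    finsum_mem_eq_finite_toFinset_sum _ (finite_setOf_isPatternSeq j)]
  simp only [Function.comp_def, survivalProb_const, sum_const, card_univ, nsmul_one,
    Nat.card_eq_fintype_card]
  have hW : (Fintype.card (MsgTuple K j m) : ℚ) ≠ 0 := Nat.cast_ne_zero.2 Fintype.card_ne_zero
  have hG : (Fintype.card (GenTuple j m l) : ℚ) ≠ 0 := Nat.cast_ne_zero.2 Fintype.card_ne_zero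
  rw [mul_comm (Fintype.card (MsgTuple K j m) : ℚ), mul_div_mul_left _ _ hG, sub_div, div_self hW,
    sum_div]
  simp_rw [mul_div_assoc]
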